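/- arXiv:2205.10598 — 4 statements merged into one kernel-verified Lean document; each statement's English description precedes it below -/
import Mathlib

section
/- If I is a critical independent set of a graph G with |I| = |N(I)| and the graph G - I - N(I) contains a nice even subdivision of T, then G is not Egerváry; conversely if G - I - N(I) is Egerváry (and G has a perfect matching with I matched to N(I)), then G is Egerváry. -/
open SimpleGraph

variable {V : Type*}

/-- A graph has a perfect matching. -/
def HasPM (G : SimpleGraph V) : Prop := ∃ M : G.Subgraph, M.IsPerfectMatching

/-- A set of vertices is independent (pairwise nonadjacent). -/
def IsIndep (G : SimpleGraph V) (s : Set V) : Prop := ∀ x ∈ s, ∀ y ∈ s, ¬ G.Adj x y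

/-- The independence number. -/
noncomputable def alphaNum (G : SimpleGraph V) : ℕ :=
  sSup {n | ∃ s : Set V, IsIndep G s ∧ s.ncard = n}

/-- The matching number. -/
noncomputable def matchNum (G : SimpleGraph V) : ℕ :=
  sSup {n | ∃ M : G.Subgraph, M.IsMatching ∧ M.edgeSet.ncard = n}

/-- A graph is König-Egerváry if α + ν = n. -/
def IsKE (G : SimpleGraph V) : Prop := alphaNum G + matchNum G = Nat.card V

/-- `G` is (the whole graph) an even subdivision of `K₄`: four corner vertices and six
internally disjoint odd paths joining each pair of corners, comprising all vertices
and edges of `G`. -/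
def IsEvenSubdivK4 (G : SimpleGraph V) : Prop :=
  ∃ (c : Fin 4 → V) (P : ∀ i j : Fin 4, G.Walk (c i) (c j)),
    Function.Injective c ∧
    (∀ i j : Fin 4, P j i = (P i j).reverse) ∧
    (∀ i j : Fin 4, i ≠ j → (P i j).IsPath ∧ Odd (P i j).length) ∧
    (∀ i j k l : Fin 4, i ≠ j → k ≠ l → ¬(i = k ∧ j = l) → ¬(i = l ∧ j = k) →
      ∀ x : V, x ∈ (P i j).support → x ∈ (P k l).support → x ∈ Set.range c) ∧
    (∀ x : V, ∃ i j : Fin 4, i ≠ j ∧ x ∈ (P i j).support) ∧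
    (∀ e : Sym2 V, e ∈ G.edgeSet ↔ ∃ i j : Fin 4, i ≠ j ∧ e ∈ (P i j).edges)

/-- `G` is (the whole graph) an even subdivision of `T`: two vertex-disjoint odd cycles
joined at blossom tips `v`, `w` by an odd path internally disjoint from the cycles,
comprising all vertices and edges of `G`. -/
def IsEvenSubdivT (G : SimpleGraph V) : Prop :=
  ∃ (v w : V) (C1 : G.Walk v v) (C2 : G.Walk w w) (P : G.Walk v w),
    C1.IsCycle ∧ C2.IsCycle ∧ Odd C1.length ∧ Odd C2.length ∧
    P.IsPath ∧ Odd P.length ∧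
    (∀ x : V, x ∈ C1.support → x ∉ C2.support) ∧
    (∀ x : V, x ∈ P.support → x ∈ C1.support → x = v) ∧
    (∀ x : V, x ∈ P.support → x ∈ C2.support → x = w) ∧
    (∀ x : V, x ∈ C1.support ∨ x ∈ C2.support ∨ x ∈ P.support) ∧
    (∀ e : Sym2 V, e ∈ G.edgeSet ↔ e ∈ C1.edges ∨ e ∈ C2.edges ∨ e ∈ P.edges)

/-- `G` contains a nice even subdivision of `T`: a subgraph `H` which is an even
subdivision of `T` and such that `G - V(H)` has a perfect matching. -/
def HasNiceEvenSubdivT (G : SimpleGraph V) : Prop :=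
  ∃ H : G.Subgraph, IsEvenSubdivT H.coe ∧ HasPM (G.induce (H.vertsᶜ))

/-- `G` has a spanning subgraph whose components are independent edges together with a
positive number of vertex-disjoint odd cycles. -/
def HasOddCycleCover (G : SimpleGraph V) : Prop :=
  ∃ (M : G.Subgraph) (k : ℕ) (u : Fin k → V) (C : ∀ i : Fin k, G.Walk (u i) (u i)),
    0 < k ∧ M.IsMatching ∧
    (∀ i, (C i).IsCycle ∧ Odd (C i).length) ∧
    (∀ i j, i ≠ j → ∀ x : V, x ∈ (C i).support → x ∉ (C j).support) ∧
    (∀ i, ∀ x ∈ (C i).support, x ∉ M.verts) ∧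
    (∀ x : V, x ∈ M.verts ∨ ∃ i, x ∈ (C i).support)

/-- A matchable graph is Egerváry iff it has no such spanning cover. -/
def IsEgervary (G : SimpleGraph V) : Prop := ¬ HasOddCycleCover G

/-- `G` contains two vertex-disjoint odd cycles. -/
def TwoDisjointOddCycles (G : SimpleGraph V) : Prop :=
  ∃ (a b : V) (C1 : G.Walk a a) (C2 : G.Walk b b),
    C1.IsCycle ∧ C2.IsCycle ∧ Odd C1.length ∧ Odd C2.length ∧
    ∀ x : V, x ∈ C1.support → x ∉ C2.support

/-- `G` is α-critical: deleting any edge increases the independence number. -/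
def AlphaCritical (G : SimpleGraph V) : Prop :=
  ∀ e ∈ G.edgeSet, alphaNum (G.deleteEdges {e}) = alphaNum G + 1

/-- The (open) neighborhood of a set of vertices. -/
def setN (G : SimpleGraph V) (I : Set V) : Set V := {x | x ∉ I ∧ ∃ y ∈ I, G.Adj x y}

/-!
Criticality of `I` together with `|I| = |N(I)|` gives Hall's condition, so `I` is perfectly
matched onto `N(I)`. Hence any odd cycle cover of `G - I - N(I)` extends to one of `G`; a nice
even subdivision of `T` provides such a cover: its two odd cycles, its odd path matched apart
from the ends, and the perfect matching of the remaining vertices.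

Conversely, give the edges of an odd cycle cover of `G` weight 2 on the matching and 1 on the
cycles, so that every vertex has total weight 2. All cover edges at `I` go to `N(I)`; since
`|I| = |N(I)|`, double counting the weight between `I` and `N(I)` shows that all cover edges at
`N(I)` go back to `I`. So a cycle meeting `I ∪ N(I)` alternates between the two sides and is
even, and the cover restricts to `G - I - N(I)`.
-/

namespace SimpleGraph.Walk

variable {G : SimpleGraph V}

theorem IsPath.exists_isMatching_verts_eq_of_even {v : V} :
    ∀ {u : V} (p : G.Walk u v), p.IsPath → Even p.length →
      ∃ M : G.Subgraph, M.IsMatching ∧ M.verts = {x | x ∈ p.support ∧ x ≠ v}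
  | _, .nil, _, _ => ⟨⊥, fun _ h => h.elim, by ext; simp⟩
  | _, .cons _ .nil, _, he => by simp at he
  | u, .cons (v := a) h (.cons (v := b) h' q), hp, he => by
    have hp' := hp.of_cons
    have hu : u ∉ (q.cons h').support := ((cons_isPath_iff h _).mp hp).2
    have ha : a ∉ q.support := ((cons_isPath_iff h' q).mp hp').2
    obtain ⟨M, hM, hMv⟩ := exists_isMatching_verts_eq_of_even q hp'.of_cons
      (by simpa [Nat.even_add_one] using he)
    have hdisj : Disjoint (G.subgraphOfAdj h).support M.support := by
      rw [hM.support_eq_verts, hMv, Set.disjoint_left]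
      rintro x hx ⟨hxq, -⟩
      rcases (G.subgraphOfAdj h).support_subset_verts hx with rfl | rfl
      · exact hu (by simp [hxq])
      · exact ha hxq
    refine ⟨G.subgraphOfAdj h ⊔ M, (Subgraph.IsMatching.subgraphOfAdj h).sup hM hdisj, ?_⟩
    have huv : u ≠ v := by rintro rfl; exact hu (end_mem_support _)
    have hav : a ≠ v := by rintro rfl; exact ha q.end_mem_support
    ext x
    simp only [Subgraph.verts_sup, subgraphOfAdj_verts, hMv, support_cons]
    aesop

theorem IsPath.exists_isMatching_verts_eq_of_odd {u v : V} (p : G.Walk u v) (hp : p.IsPath)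
    (ho : Odd p.length) :
    ∃ M : G.Subgraph, M.IsMatching ∧ M.verts = {x | x ∈ p.support ∧ x ≠ u ∧ x ≠ v} := by
  cases p with
  | nil => simp at ho
  | cons h q =>
    have hu : u ∉ q.support := ((cons_isPath_iff h q).mp hp).2
    obtain ⟨M, hM, hMv⟩ := hp.of_cons.exists_isMatching_verts_eq_of_even q
      (by simpa [Nat.odd_add_one] using ho)
    refine ⟨M, hM, ?_⟩
    ext x
    simp only [hMv, support_cons]
    aesop

theorem mem_of_forall_edges_alternate {A B : Set V} :
    ∀ {u v : V} (p : G.Walk u v),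
      (∀ x y, s(x, y) ∈ p.edges → (x ∈ A → y ∈ B) ∧ (x ∈ B → y ∈ A)) → u ∈ A →
      (Even p.length → v ∈ A) ∧ (Odd p.length → v ∈ B)
  | _, _, .nil, _, hu => ⟨fun _ => hu, fun h => by simp at h⟩
  | _, _, .cons h q, hp, hu => by
    have hnext : _ ∈ B := (hp _ _ (List.mem_cons_self ..)).1 hu
    have ih := @mem_of_forall_edges_alternate B A _ _ q
      (fun x y hxy => (hp x y (List.mem_cons_of_mem _ hxy)).symm) hnext
    simp only [length_cons, Nat.even_add_one, Nat.odd_add_one, Nat.not_even_iff_odd,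
      Nat.not_odd_iff_even]
    exact ⟨ih.2, ih.1⟩

theorem even_length_of_forall_edges_alternate {A B : Set V} (hAB : Disjoint A B) {u x : V}
    (p : G.Walk u u) (hp : ∀ x y, s(x, y) ∈ p.edges → (x ∈ A → y ∈ B) ∧ (x ∈ B → y ∈ A))
    (hx : x ∈ p.support) (hxAB : x ∈ A ∪ B) : Even p.length := by
  classical
  have hdrop : ∀ a b, s(a, b) ∈ (p.dropUntil x hx).edges →
      (a ∈ A → b ∈ B) ∧ (a ∈ B → b ∈ A) :=
    fun a b hab => hp a b (p.edges_dropUntil_subset_edges hx hab)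
  have huAB : u ∈ A ∪ B := by
    rcases hxAB with hxA | hxB
    · have := mem_of_forall_edges_alternate _ hdrop hxA
      rcases Nat.even_or_odd (p.dropUntil x hx).length with h | h
      exacts [Or.inl (this.1 h), Or.inr (this.2 h)]
    · have := mem_of_forall_edges_alternate _ (fun a b hab => (hdrop a b hab).symm) hxB
      rcases Nat.even_or_odd (p.dropUntil x hx).length with h | h
      exacts [Or.inr (this.1 h), Or.inl (this.2 h)]
  by_contra hodd
  rw [Nat.not_even_iff_odd] at hodd
  rcases huAB with huA | huB
  · exact hAB.notMem_of_mem_left huA ((mem_of_forall_edges_alternate p hp huA).2 hodd)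
  · exact hAB.notMem_of_mem_right huB
      ((mem_of_forall_edges_alternate p (fun a b hab => (hp a b hab).symm) huB).2 hodd)

end SimpleGraph.Walk

theorem Finset.eq_zero_of_card_le_of_sum_eq [Fintype V] {c : V → V → ℕ}
    (hc : ∀ x y, c x y = c y x) {d : ℕ} (hd : ∀ x, ∑ y, c x y = d) {s t : Finset V}
    (hst : t.card ≤ s.card) (hs : ∀ x ∈ s, ∀ y ∉ t, c x y = 0) :
    ∀ y ∈ t, ∀ x ∉ s, c y x = 0 := by
  classical
  have hs_sum : ∑ x ∈ s, ∑ y ∈ t, c x y = s.card * d := by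
    rw [Finset.card_eq_sum_ones, Finset.sum_mul, one_mul]
    refine Finset.sum_congr rfl fun x hx => ?_
    rw [← hd x, Finset.sum_subset (Finset.subset_univ t) fun y _ hy => hs x hx y hy]
  have ht_sum : ∑ y ∈ t, ∑ x ∈ s, c y x + ∑ y ∈ t, ∑ x ∈ sᶜ, c y x = t.card * d := by
    rw [← Finset.sum_add_distrib, Finset.card_eq_sum_ones, Finset.sum_mul, one_mul]
    exact Finset.sum_congr rfl fun y _ => (Finset.sum_add_sum_compl s _).trans (hd y)
  have hswap : ∑ y ∈ t, ∑ x ∈ s, c y x = ∑ x ∈ s, ∑ y ∈ t, c x y := by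
    rw [Finset.sum_comm]
    simp only [hc]
  have hzero : ∑ y ∈ t, ∑ x ∈ sᶜ, c y x = 0 := by
    have := Nat.mul_le_mul_right d hst
    omega
  intro y hy x hx
  exact (Finset.sum_eq_zero_iff.mp ((Finset.sum_eq_zero_iff.mp hzero) y hy)) x
    (Finset.mem_compl.mpr hx)

/-- The data of `HasOddCycleCover`. -/
structure OddCycleCover (G : SimpleGraph V) where
  M : G.Subgraph
  k : ℕ
  u : Fin k → V
  C : ∀ i, G.Walk (u i) (u i)
  k_pos : 0 < k
  isMatching : M.IsMatching
  isCycle : ∀ i, (C i).IsCycle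
  odd_length : ∀ i, Odd (C i).length
  disjoint : ∀ i j, i ≠ j → ∀ x ∈ (C i).support, x ∉ (C j).support
  notMem_verts : ∀ i, ∀ x ∈ (C i).support, x ∉ M.verts
  cover : ∀ x, x ∈ M.verts ∨ ∃ i, x ∈ (C i).support

section

variable {W : Type*} {G : SimpleGraph V} {K : SimpleGraph W}

theorem IsIndep.mem_setN_of_adj {I : Set V} (hI : IsIndep G I) {x y : V} (hx : x ∈ I)
    (hxy : G.Adj x y) : y ∈ setN G I :=
  ⟨fun hy => hI x hx y hy hxy, x, hx, hxy.symm⟩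

theorem ncard_le_ncard_setN_of_critical {I : Set V} (hI : IsIndep G I)
    (hcrit : ∀ J : Set V, IsIndep G J →
      ((setN G I).ncard : ℤ) - I.ncard ≤ ((setN G J).ncard : ℤ) - J.ncard)
    (hcard : I.ncard = (setN G I).ncard) {J : Set V} (hJ : J ⊆ I) :
    J.ncard ≤ (setN G J).ncard := by
  have := hcrit J fun x hx y hy => hI x (hJ hx) y (hJ hy)
  omega

theorem IsIndep.exists_isMatching_verts_eq_union_setN [Fintype V] {I : Set V} (hI : IsIndep G I)
    (hhall : ∀ J ⊆ I, J.ncard ≤ (setN G J).ncard) (hcard : I.ncard = (setN G I).ncard) :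
    ∃ M : G.Subgraph, M.IsMatching ∧ M.verts = I ∪ setN G I := by
  classical
  obtain ⟨f, hf, hadj⟩ := (Fintype.all_card_le_filter_rel_iff_exists_injective
    (fun (x : I) (y : setN G I) => G.Adj x y)).mp fun A => by
      have hsub : setN G (Subtype.val '' (A : Set I)) ⊆ Subtype.val ''
          (({y | ∃ x ∈ A, G.Adj x y} : Finset (setN G I)) : Set (setN G I)) := by
        rintro y ⟨-, _, ⟨x, hx, rfl⟩, hyx⟩
        exact ⟨⟨y, hI.mem_setN_of_adj x.2 hyx.symm⟩, by simpa using ⟨x, ⟨x.2, hx⟩, hyx.symm⟩, rfl⟩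
      have := (hhall _ (Subtype.coe_image_subset I A)).trans (Set.ncard_le_ncard hsub)
      rwa [Set.ncard_image_of_injective _ Subtype.val_injective,
        Set.ncard_image_of_injective _ Subtype.val_injective, Set.ncard_coe_finset,
        Set.ncard_coe_finset] at this
  have hbij : Function.Bijective f := by
    rw [Fintype.bijective_iff_injective_and_card]
    refine ⟨hf, ?_⟩
    simpa [← Nat.card_eq_fintype_card, Nat.card_coe_set_eq] using hcard
  obtain ⟨M, hMv, hM⟩ := Subgraph.IsMatching.exists_of_disjoint_sets_of_equiv
    (Set.disjoint_left.mpr fun _ hx hxN => hxN.1 hx) (Equiv.ofBijective f hbij) hadj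
  exact ⟨M, hM, hMv⟩

theorem hasOddCycleCover_iff : HasOddCycleCover G ↔ Nonempty (OddCycleCover G) := by
  constructor
  · rintro ⟨M, k, u, C, hk, hM, hC, hdisj, hMC, hcov⟩
    exact ⟨⟨M, k, u, C, hk, hM, fun i => (hC i).1, fun i => (hC i).2, hdisj, hMC, hcov⟩⟩
  · rintro ⟨F⟩
    exact ⟨F.M, F.k, F.u, F.C, F.k_pos, F.isMatching, fun i => ⟨F.isCycle i, F.odd_length i⟩,
      F.disjoint, F.notMem_verts, F.cover⟩

namespace OddCycleCover

def map (F : OddCycleCover K) (f : K →g G) (hf : Function.Injective f) (M : G.Subgraph)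
    (hM : M.IsMatching) (hMv : M.verts = (Set.range f)ᶜ) : OddCycleCover G where
  M := F.M.map f ⊔ M
  k := F.k
  u := f ∘ F.u
  C i := (F.C i).map f
  k_pos := F.k_pos
  isMatching := by
    refine (F.isMatching.map f hf).sup hM ?_
    rw [(F.isMatching.map f hf).support_eq_verts, hM.support_eq_verts, hMv,
      Set.disjoint_compl_right_iff_subset, Subgraph.map_verts]
    exact Set.image_subset_range _ _
  isCycle i := (F.isCycle i).map hf
  odd_length i := by simpa using F.odd_length i
  disjoint i j hij := by
    simp only [Walk.support_map, List.mem_map]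
    rintro _ ⟨x, hx, rfl⟩ ⟨y, hy, hxy⟩
    exact F.disjoint i j hij x hx (hf hxy ▸ hy)
  notMem_verts i := by
    simp only [Walk.support_map, List.mem_map, Subgraph.verts_sup, Subgraph.map_verts, hMv]
    rintro _ ⟨x, hx, rfl⟩ (⟨y, hy, hxy⟩ | hfx)
    · exact F.notMem_verts i x hx (hf hxy ▸ hy)
    · exact hfx ⟨x, rfl⟩
  cover x := by
    by_cases hx : x ∈ Set.range f
    · obtain ⟨y, rfl⟩ := hx
      rcases F.cover y with hy | ⟨i, hy⟩
      · exact Or.inl (Or.inl ⟨y, hy, rfl⟩)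
      · exact Or.inr ⟨i, (Walk.support_map f (F.C i)).symm ▸ List.mem_map_of_mem hy⟩
    · exact Or.inl (Or.inr (hMv ▸ hx))

def induce (F : OddCycleCover G) (S : Set V) (hC : ∀ i, ∀ x ∈ (F.C i).support, x ∈ S)
    (hM : ∀ x y, F.M.Adj x y → x ∈ S → y ∈ S) : OddCycleCover (G.induce S) where
  M := F.M.comap (Embedding.induce S).toHom
  k := F.k
  u i := ⟨F.u i, hC i _ (F.C i).start_mem_support⟩
  C i := (F.C i).induce S (hC i)
  k_pos := F.k_pos
  isMatching := by
    rintro x (hx : x.1 ∈ F.M.verts)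
    obtain ⟨y, hxy, hy⟩ := F.isMatching hx
    refine ⟨⟨y, hM _ _ hxy x.2⟩, ⟨F.M.adj_sub hxy, hxy⟩, fun z hz => Subtype.ext (hy z hz.2)⟩
  isCycle i := by
    rw [← Walk.isCycle_map_iff_of_injective (f := (Embedding.induce S).toHom) Subtype.val_injective,
      Walk.map_induce]
    exact F.isCycle i
  odd_length i := by
    rw [← Walk.length_map (Embedding.induce S).toHom, Walk.map_induce]
    exact F.odd_length i
  disjoint i j hij x := by
    simpa only [Walk.support_induce, List.mem_attachWith] using F.disjoint i j hij x
  notMem_verts i x hx :=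
    F.notMem_verts i x (by simpa only [Walk.support_induce, List.mem_attachWith] using hx)
  cover x := by
    rcases F.cover x with hx | ⟨i, hx⟩
    · exact Or.inl hx
    · exact Or.inr ⟨i, by simpa only [Walk.support_induce, List.mem_attachWith] using hx⟩

variable (F : OddCycleCover G)

open Classical in
noncomputable def weight (x y : V) : ℕ :=
  if F.M.Adj x y then 2 else if ∃ i, (F.C i).toSubgraph.Adj x y then 1 else 0

variable {F}

theorem weight_comm (x y : V) : F.weight x y = F.weight y x := by
  have hM : F.M.Adj x y ↔ F.M.Adj y x := F.M.adj_comm x y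
  have hC : (∃ i, (F.C i).toSubgraph.Adj x y) ↔ ∃ i, (F.C i).toSubgraph.Adj y x :=
    exists_congr fun i => Subgraph.adj_comm _ x y
  unfold weight
  split_ifs <;> tauto

theorem adj_of_weight_ne_zero {x y : V} (h : F.weight x y ≠ 0) : G.Adj x y := by
  unfold weight at h
  split_ifs at h with hM hC
  · exact F.M.adj_sub hM
  · obtain ⟨i, hi⟩ := hC
    exact hi.adj_sub
  · exact absurd rfl h

theorem weight_ne_zero_of_adj {x y : V} (h : F.M.Adj x y) : F.weight x y ≠ 0 := by
  simp [weight, h]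

theorem weight_ne_zero_of_mem_edges {i : Fin F.k} {x y : V} (h : s(x, y) ∈ (F.C i).edges) :
    F.weight x y ≠ 0 := by
  unfold weight
  split_ifs with hM hC
  · exact two_ne_zero
  · exact one_ne_zero
  · exact absurd ⟨i, Walk.adj_toSubgraph_iff_mem_edges.mpr h⟩ hC

theorem sum_weight [Fintype V] (x : V) : ∑ y, F.weight x y = 2 := by
  classical
  rcases F.cover x with hx | ⟨i, hx⟩
  · obtain ⟨p, hp, hpu⟩ := F.isMatching hx
    have hweight : ∀ y, F.weight x y = if y = p then 2 else 0 := by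
      intro y
      have hC : ¬ ∃ j, (F.C j).toSubgraph.Adj x y := fun ⟨j, hj⟩ =>
        F.notMem_verts j x (Walk.mem_support_of_adj_toSubgraph hj) hx
      by_cases hy : y = p
      · simp [weight, hy, hp]
      · have hM : ¬ F.M.Adj x y := fun h => hy (hpu y h)
        simp [weight, hy, hC, hM]
    simp [hweight]
  · have hweight : ∀ y, F.weight x y = if (F.C i).toSubgraph.Adj x y then 1 else 0 := by
      intro y
      have hM : ¬ F.M.Adj x y := fun h => F.notMem_verts i x hx (F.M.edge_vert h)
      have hC : (∃ j, (F.C j).toSubgraph.Adj x y) ↔ (F.C i).toSubgraph.Adj x y := by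
        refine ⟨fun ⟨j, hj⟩ => ?_, fun h => ⟨i, h⟩⟩
        obtain rfl : j = i := by_contra fun hji =>
          F.disjoint j i hji x (Walk.mem_support_of_adj_toSubgraph hj) hx
        exact hj
      simp only [weight, hM, hC, if_false]
    rw [Finset.sum_congr rfl fun y _ => hweight y, Finset.sum_boole, ← Set.ncard_coe_finset,
      ← (F.isCycle i).ncard_neighborSet_toSubgraph_eq_two hx]
    simp only [Finset.coe_filter, Finset.mem_univ, true_and]
    rfl

theorem mem_setN_of_weight_ne_zero {I : Set V} (hI : IsIndep G I) {x y : V} (hx : x ∈ I)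
    (h : F.weight x y ≠ 0) : y ∈ setN G I :=
  hI.mem_setN_of_adj hx (adj_of_weight_ne_zero h)

theorem mem_of_weight_ne_zero_of_mem_setN [Fintype V] {I : Set V} (hI : IsIndep G I)
    (hcard : I.ncard = (setN G I).ncard) {x y : V} (hy : y ∈ setN G I) (h : F.weight y x ≠ 0) :
    x ∈ I := by
  classical
  by_contra hx
  refine h (Finset.eq_zero_of_card_le_of_sum_eq weight_comm sum_weight
    (s := I.toFinset) (t := (setN G I).toFinset) ?_ ?_ y (by simpa using hy) x (by simpa using hx))
  · rw [← Set.ncard_eq_toFinset_card', ← Set.ncard_eq_toFinset_card', hcard]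
  · intro a ha b hb
    by_contra hab
    exact (by simpa using hb : b ∉ setN G I)
      (mem_setN_of_weight_ne_zero hI (by simpa using ha) hab)

end OddCycleCover

theorem IsEvenSubdivT.hasOddCycleCover (h : IsEvenSubdivT G) : HasOddCycleCover G := by
  obtain ⟨v, w, C1, C2, P, hC1, hC2, ho1, ho2, hP, hoP, hdisj, hPC1, hPC2, hcov, -⟩ := h
  obtain ⟨M, hM, hMv⟩ := hP.exists_isMatching_verts_eq_of_odd P hoP
  refine ⟨M, 2, ![v, w], fun i => match i with | 0 => C1 | 1 => C2, two_pos, hM,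
    ?_, ?_, ?_, ?_⟩
  · intro i
    fin_cases i
    exacts [⟨hC1, ho1⟩, ⟨hC2, ho2⟩]
  · intro i j hij x hxi hxj
    fin_cases i <;> fin_cases j
    all_goals first
      | exact hij rfl
      | exact hdisj x hxi hxj
      | exact hdisj x hxj hxi
  · intro i x hx hxM
    rw [hMv] at hxM
    fin_cases i
    · exact hxM.2.1 (hPC1 x hxM.1 hx)
    · exact hxM.2.2 (hPC2 x hxM.1 hx)
  · intro x
    rcases hcov x with hx | hx | hx
    · exact Or.inr ⟨0, hx⟩
    · exact Or.inr ⟨1, hx⟩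
    · by_cases hxv : x = v
      · exact Or.inr ⟨0, hxv ▸ C1.start_mem_support⟩
      by_cases hxw : x = w
      · exact Or.inr ⟨1, hxw ▸ C2.start_mem_support⟩
      exact Or.inl (hMv ▸ ⟨hx, hxv, hxw⟩)

theorem HasOddCycleCover.of_injective_hom (h : HasOddCycleCover K) (f : K →g G)
    (hf : Function.Injective f) (hM : ∃ M : G.Subgraph, M.IsMatching ∧ M.verts = (Set.range f)ᶜ) :
    HasOddCycleCover G := by
  obtain ⟨F⟩ := hasOddCycleCover_iff.mp h
  obtain ⟨M, hM, hMv⟩ := hM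
  exact hasOddCycleCover_iff.mpr ⟨F.map f hf M hM hMv⟩

theorem HasPM.exists_isMatching_verts_eq {S : Set V} (h : HasPM (G.induce S)) :
    ∃ M : G.Subgraph, M.IsMatching ∧ M.verts = S := by
  obtain ⟨M, hM⟩ := h
  refine ⟨M.map (Embedding.induce S).toHom, hM.1.map _ Subtype.val_injective, ?_⟩
  rw [Subgraph.map_verts, hM.2.verts_eq_univ, Set.image_univ]
  exact Subtype.range_coe

theorem HasNiceEvenSubdivT.hasOddCycleCover (h : HasNiceEvenSubdivT G) : HasOddCycleCover G := by
  obtain ⟨H, hT, hPM⟩ := h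
  refine hT.hasOddCycleCover.of_injective_hom H.hom Subgraph.hom_injective ?_
  have hrange : Set.range H.hom = H.verts :=
    Set.ext fun x => ⟨fun ⟨y, hy⟩ => hy ▸ y.2, fun hx => ⟨⟨x, hx⟩, rfl⟩⟩
  rw [hrange]
  exact hPM.exists_isMatching_verts_eq

theorem HasOddCycleCover.of_induce_compl_union_setN [Fintype V] {I : Set V} (hI : IsIndep G I)
    (hcrit : ∀ J : Set V, IsIndep G J →
      ((setN G I).ncard : ℤ) - I.ncard ≤ ((setN G J).ncard : ℤ) - J.ncard)
    (hcard : I.ncard = (setN G I).ncard) (h : HasOddCycleCover (G.induce (I ∪ setN G I)ᶜ)) :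
    HasOddCycleCover G := by
  obtain ⟨M, hM, hMv⟩ := hI.exists_isMatching_verts_eq_union_setN
    (fun _ hJ => ncard_le_ncard_setN_of_critical hI hcrit hcard hJ) hcard
  have hrange : Set.range (Embedding.induce (G := G) (I ∪ setN G I)ᶜ).toHom = (I ∪ setN G I)ᶜ :=
    Subtype.range_coe
  refine h.of_injective_hom (Embedding.induce _).toHom Subtype.val_injective ⟨M, hM, ?_⟩
  rw [hMv, hrange, compl_compl]

theorem HasOddCycleCover.induce_compl_union_setN [Fintype V] {I : Set V} (hI : IsIndep G I)
    (hcard : I.ncard = (setN G I).ncard) (h : HasOddCycleCover G) :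
    HasOddCycleCover (G.induce (I ∪ setN G I)ᶜ) := by
  obtain ⟨F⟩ := hasOddCycleCover_iff.mp h
  have hdisj : Disjoint I (setN G I) := Set.disjoint_left.mpr fun _ hx hxN => hxN.1 hx
  have hcycles : ∀ i, ∀ x ∈ (F.C i).support, x ∈ (I ∪ setN G I)ᶜ := by
    intro i x hx hxIN
    refine Nat.not_even_iff_odd.mpr (F.odd_length i)
      ((F.C i).even_length_of_forall_edges_alternate hdisj (fun a b hab => ?_) hx hxIN)
    have hw := F.weight_ne_zero_of_mem_edges hab
    exact ⟨fun ha => F.mem_setN_of_weight_ne_zero hI ha hw,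
      fun ha => F.mem_of_weight_ne_zero_of_mem_setN hI hcard ha hw⟩
  have hmatching : ∀ x y, F.M.Adj x y → x ∈ (I ∪ setN G I)ᶜ → y ∈ (I ∪ setN G I)ᶜ := by
    rintro x y hxy hx (hy | hy)
    · exact hx (Or.inr (F.mem_setN_of_weight_ne_zero hI hy (F.weight_ne_zero_of_adj hxy.symm)))
    · exact hx (Or.inl
        (F.mem_of_weight_ne_zero_of_mem_setN hI hcard hy (F.weight_ne_zero_of_adj hxy.symm)))
  exact hasOddCycleCover_iff.mpr ⟨F.induce _ hcycles hmatching⟩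

end

/-- For a critical independent set `I` with `|I| = |N(I)|`: if `G - I - N(I)` contains a
nice even subdivision of `T`, then `G` is not Egerváry; conversely, if `G - I - N(I)` is
Egerváry and `G` has a perfect matching matching `I` into `N(I)`, then `G` is Egerváry. -/
theorem critical_indep_egervary {V : Type*} [Fintype V] (G : SimpleGraph V) (I : Set V)
    (hind : IsIndep G I)
    (hcrit : ∀ J : Set V, IsIndep G J →
      ((setN G I).ncard : ℤ) - I.ncard ≤ ((setN G J).ncard : ℤ) - J.ncard)
    (hcard : I.ncard = (setN G I).ncard) :
    (HasNiceEvenSubdivT (G.induce ((I ∪ setN G I)ᶜ)) → ¬ IsEgervary G) ∧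
    ((∃ M : G.Subgraph, M.IsPerfectMatching ∧ ∀ x ∈ I, ∀ y : V, M.Adj x y → y ∈ setN G I) →
      IsEgervary (G.induce ((I ∪ setN G I)ᶜ)) → IsEgervary G) :=
  ⟨fun hT hEg => hEg (hT.hasOddCycleCover.of_induce_compl_union_setN hind hcrit hcard),
    fun _ hEg hG => hEg (hG.induce_compl_union_setN hind hcard)⟩
end

section
/- If H is an Egerváry graph, R is a matchable König-Egerváry graph vertex-disjoint from H, I is a maximum independent set of R, and G is formed from the disjoint union of H and R by adding any set of edges joining vertices of H to vertices of N_R(I), then G is Egerváry. -/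
/-! Read an odd cycle cover of `G` as a permutation `σ` of `V`: matching edges are
transpositions and each cycle is rotated. Every neighbour of `I` lies in `N = B \ I`, and
the König-Egerváry property gives `|N| ≤ |I|` because `ν(R) ≤ |B| / 2`. Hence `σ⁻¹` maps `I`
injectively onto `N`, so `σ` maps `I` into `N` and `N` into `I`. A cycle of the cover through
`B` would therefore alternate between `I` and `N` and be even. So the cycles avoid `B`, the
matching edges at `B` stay inside `B`, and the cover restricts to an odd cycle cover of
`G[A]`. -/

open SimpleGraph

variable {V : Type*}

lemma Relator.RightUnique.mem_of_rel_of_ncard_le [Finite V] {R : V → V → Prop}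
    (hr : Relator.RightUnique R) (hR : ∀ y, ∃ x, R x y) {I N : Set V}
    (hIN : ∀ ⦃x y⦄, R x y → y ∈ I → x ∈ N) (hcard : N.ncard ≤ I.ncard) ⦃x y : V⦄
    (hxy : R x y) (hx : x ∈ N) : y ∈ I := by
  choose τ hτ using hR
  have hinj : Set.InjOn τ I := fun a _ b _ hab => hr (hτ a) (hab ▸ hτ b)
  have himage : τ '' I = N :=
    Set.eq_of_subset_of_ncard_le (Set.image_subset_iff.2 fun v hv => hIN (hτ v) hv)
      (by rwa [hinj.ncard_image]) (Set.toFinite N)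
  obtain ⟨v, hv, rfl⟩ := himage ▸ hx
  exact hr (hτ v) hxy ▸ hv

namespace SimpleGraph

variable {G : SimpleGraph V}

namespace Walk

lemma IsCycle.injOn_dart_fst {u : V} {c : G.Walk u u} (hc : c.IsCycle) :
    Set.InjOn (fun d : G.Dart => d.fst) {d | d ∈ c.darts} := fun _ hd _ hd' h =>
  List.inj_on_of_nodup_map (by rw [map_fst_darts]; exact hc.nodup_dropLast_support) hd hd' h

lemma exists_mem_darts_snd_eq {u v : V} {c : G.Walk u u} (hc : ¬c.Nil) (hv : v ∈ c.support) :
    ∃ d ∈ c.darts, d.snd = v := by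
  have hv' : v ∈ c.support.tail := by
    rw [← cons_tail_support, List.mem_cons] at hv
    exact hv.elim (fun h => h ▸ end_mem_tail_support hc) id
  rw [← map_snd_darts, List.mem_map] at hv'
  exact hv'

lemma mem_of_forall_darts_alternate {I N : Set V} {a b : V} (p : G.Walk a b)
    (hp : ∀ d ∈ p.darts, (d.fst ∈ I → d.snd ∈ N) ∧ (d.fst ∈ N → d.snd ∈ I)) (ha : a ∈ I) :
    (Even p.length → b ∈ I) ∧ (Odd p.length → b ∈ N) := by
  induction p generalizing I N with
  | nil => simpa using ha
  | cons h q ih =>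
    have hq := ih (fun d hd => (hp d (List.mem_cons_of_mem _ hd)).symm)
      ((hp _ List.mem_cons_self).1 ha)
    simp only [length_cons, Nat.even_add_one, Nat.odd_add_one, Nat.not_even_iff_odd,
      Nat.not_odd_iff_even]
    exact hq.symm

lemma notMem_of_odd_of_forall_darts_alternate {I N : Set V} (hIN : Disjoint I N) {u x : V}
    {c : G.Walk u u} (hc : Odd c.length)
    (hp : ∀ d ∈ c.darts, (d.fst ∈ I → d.snd ∈ N) ∧ (d.fst ∈ N → d.snd ∈ I))
    (hx : x ∈ c.support) : x ∉ I ∧ x ∉ N := by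
  classical
  have hr : ∀ d ∈ (c.rotate x hx).darts, (d.fst ∈ I → d.snd ∈ N) ∧ (d.fst ∈ N → d.snd ∈ I) :=
    fun d hd => hp d ((rotate_darts c x hx).mem_iff.1 hd)
  have hodd : Odd (c.rotate x hx).length := by rwa [length_rotate]
  refine ⟨fun hxI => ?_, fun hxN => ?_⟩
  · exact hIN.ne_of_mem hxI ((mem_of_forall_darts_alternate _ hr hxI).2 hodd) rfl
  · exact hIN.ne_of_mem ((mem_of_forall_darts_alternate _ (fun d hd => (hr d hd).symm) hxN).2
      hodd) hxN rfl

end Walk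

lemma Subgraph.IsMatching.two_mul_ncard_edgeSet [Finite V] {M : G.Subgraph}
    (h : M.IsMatching) : 2 * M.edgeSet.ncard = M.verts.ncard := by
  have : Fintype M.edgeSet := Fintype.ofFinite _
  have hfiber : ∀ e : M.edgeSet, Nat.card (h.toEdge ⁻¹' {e}) = 2 := by
    rintro ⟨e, he⟩
    induction e using Sym2.ind with
    | h x y =>
      rw [h.toEdge_preimage_singleton he, Nat.card_coe_set_eq,
        Set.ncard_pair (fun hxy => (M.adj_sub he).ne (Subtype.ext_iff.1 hxy))]
  calc 2 * M.edgeSet.ncard = ∑ e : M.edgeSet, Nat.card (h.toEdge ⁻¹' {e}) := by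
        simp only [hfiber, Finset.sum_const, Finset.card_univ, smul_eq_mul,
          ← Nat.card_eq_fintype_card, Nat.card_coe_set_eq, mul_comm]
    _ = Nat.card (Σ e : M.edgeSet, h.toEdge ⁻¹' {e}) := Nat.card_sigma.symm
    _ = Nat.card M.verts := Nat.card_congr (Equiv.sigmaFiberEquiv h.toEdge)
    _ = M.verts.ncard := Nat.card_coe_set_eq _

lemma two_mul_matchNum_le [Finite V] (G : SimpleGraph V) : 2 * matchNum G ≤ Nat.card V := by
  suffices matchNum G ≤ Nat.card V / 2 by omega
  refine csSup_le' fun n ⟨M, hM, hn⟩ => ?_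
  have := hn ▸ hM.two_mul_ncard_edgeSet
  have := Set.ncard_le_card M.verts
  omega

lemma matchNum_le_alphaNum_of_isKE [Finite V] (h : IsKE G) : matchNum G ≤ alphaNum G := by
  have := two_mul_matchNum_le G
  rw [IsKE] at h
  omega

variable {k : ℕ} {u : Fin k → V}

structure IsCycleCover (M : G.Subgraph) (C : ∀ i : Fin k, G.Walk (u i) (u i)) : Prop where
  isMatching : M.IsMatching
  isCycle : ∀ i, (C i).IsCycle
  disjoint : ∀ i j, i ≠ j → ∀ x : V, x ∈ (C i).support → x ∉ (C j).support
  notMem_verts : ∀ i, ∀ x ∈ (C i).support, x ∉ M.verts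
  mem_or_mem : ∀ x : V, x ∈ M.verts ∨ ∃ i, x ∈ (C i).support

/-- For a cycle cover this is the graph of a permutation of `V`: each matching edge is a
transposition and each cycle is traversed along its walk. -/
def IsCoverStep (M : G.Subgraph) (C : ∀ i : Fin k, G.Walk (u i) (u i)) (x y : V) : Prop :=
  M.Adj x y ∨ ∃ i, ∃ d ∈ (C i).darts, d.fst = x ∧ d.snd = y

variable {M : G.Subgraph} {C : ∀ i : Fin k, G.Walk (u i) (u i)}

lemma IsCoverStep.adj {x y : V} : IsCoverStep M C x y → G.Adj x y
  | .inl h => M.adj_sub h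
  | .inr ⟨_, d, _, hx, hy⟩ => hx ▸ hy ▸ d.adj

namespace IsCycleCover

lemma rightUnique (hMC : IsCycleCover M C) : Relator.RightUnique (IsCoverStep M C) := by
  have hmem i {d} (hd : d ∈ (C i).darts) := (C i).dart_fst_mem_support_of_mem_darts hd
  rintro x y y' (h | ⟨i, d, hd, rfl, rfl⟩) (h' | ⟨j, d', hd', hx, rfl⟩)
  · exact hMC.isMatching.eq_of_adj_left h h'
  · exact absurd h.fst_mem (hMC.notMem_verts j _ (hx ▸ hmem j hd'))
  · exact absurd h'.fst_mem (hMC.notMem_verts i _ (hmem i hd))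
  · obtain rfl : i = j :=
      by_contra fun hij => hMC.disjoint i j hij _ (hmem i hd) (hx ▸ hmem j hd')
    rw [(hMC.isCycle i).injOn_dart_fst hd hd' hx.symm]

lemma exists_isCoverStep (hMC : IsCycleCover M C) (y : V) : ∃ x, IsCoverStep M C x y := by
  rcases hMC.mem_or_mem y with hy | ⟨i, hy⟩
  · obtain ⟨x, hyx, -⟩ := hMC.isMatching hy
    exact ⟨x, .inl hyx.symm⟩
  · obtain ⟨d, hd, rfl⟩ := Walk.exists_mem_darts_snd_eq (hMC.isCycle i).not_nil hy
    exact ⟨d.fst, .inr ⟨i, d, hd, rfl, rfl⟩⟩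

lemma hasOddCycleCover_induce (hMC : IsCycleCover M C) {A : Set V} (hk : 0 < k)
    (hodd : ∀ i, Odd (C i).length) (hCA : ∀ i, ∀ x ∈ (C i).support, x ∈ A)
    (hMA : ∀ x ∈ A, ∀ y, M.Adj x y → y ∈ A) : HasOddCycleCover (G.induce A) := by
  have hsupp : ∀ i (x : A), x ∈ ((C i).induce A (hCA i)).support ↔ (x : V) ∈ (C i).support := by
    simp
  refine ⟨M.comap (Embedding.induce A).toHom, k, fun i => ⟨u i, hCA i _ (C i).start_mem_support⟩,
    fun i => (C i).induce A (hCA i), hk, ?_, fun i => ⟨?_, ?_⟩, ?_, ?_, ?_⟩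
  · intro x hx
    obtain ⟨y, hxy, hy⟩ := hMC.isMatching hx
    exact ⟨⟨y, hMA x x.2 y hxy⟩, ⟨M.adj_sub hxy, hxy⟩, fun y' hy' => Subtype.ext (hy _ hy'.2)⟩
  · exact .of_map (f := (Embedding.induce A).toHom) (by rw [Walk.map_induce]; exact hMC.isCycle i)
  · simpa [← Walk.length_map (Embedding.induce A).toHom, Walk.map_induce] using hodd i
  · intro i j hij x hxi hxj
    exact hMC.disjoint i j hij x ((hsupp i x).1 hxi) ((hsupp j x).1 hxj)
  · intro i x hx
    exact hMC.notMem_verts i x ((hsupp i x).1 hx)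
  · intro x
    exact (hMC.mem_or_mem x).imp id fun ⟨i, hi⟩ => ⟨i, (hsupp i x).2 hi⟩

end IsCycleCover

end SimpleGraph

theorem egervary_of_KE_extension_general {V : Type*} [Fintype V] (G : SimpleGraph V)
    (A B : Set V) (hdisj : Disjoint A B) (hunion : A ∪ B = Set.univ)
    (hHeg : IsEgervary (G.induce A))
    (hRKE : IsKE (G.induce B))
    (I : Set V) (hIB : I ⊆ B) (hIind : IsIndep G I)
    (hImax : I.ncard = alphaNum (G.induce B))
    (hcross : ∀ x ∈ A, ∀ y ∈ B, G.Adj x y → y ∉ I ∧ ∃ z ∈ I, G.Adj y z) :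
    IsEgervary G := by
  rintro ⟨M, k, u, C, hk, hM, hC, hCdisj, hCM, hcover⟩
  have hMC : IsCycleCover M C := ⟨hM, fun i => (hC i).1, hCdisj, hCM, hcover⟩
  have hAB (x : V) : x ∈ A ∨ x ∈ B := Set.eq_univ_iff_forall.1 hunion x
  have hnbr : ∀ ⦃x y⦄, G.Adj x y → y ∈ I → x ∈ B \ I := fun x y hxy hy =>
    (hAB x).elim (fun hx => absurd hy (hcross x hx y (hIB hy) hxy).1)
      fun hx => ⟨hx, fun hxI => hIind x hxI y hy hxy⟩
  have hcard : (B \ I).ncard ≤ I.ncard := by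
    have hB : B.ncard = alphaNum (G.induce B) + matchNum (G.induce B) := by
      rw [hRKE, Nat.card_coe_set_eq]
    have := matchNum_le_alphaNum_of_isKE hRKE
    rw [Set.ncard_sdiff hIB, hImax]
    omega
  have hstep : ∀ ⦃x y⦄, IsCoverStep M C x y → (x ∈ I → y ∈ B \ I) ∧ (x ∈ B \ I → y ∈ I) :=
    fun x y h => ⟨hnbr h.adj.symm,
      hMC.rightUnique.mem_of_rel_of_ncard_le hMC.exists_isCoverStep (fun _ _ h => hnbr h.adj)
        hcard h⟩
  have hCA : ∀ i, ∀ x ∈ (C i).support, x ∈ A := fun i x hx =>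
    have ⟨hxI, hxN⟩ := Walk.notMem_of_odd_of_forall_darts_alternate Set.disjoint_sdiff_right
      (hC i).2 (fun d hd => hstep (.inr ⟨i, d, hd, rfl, rfl⟩)) hx
    (hAB x).resolve_right fun hxB => hxN ⟨hxB, hxI⟩
  have hMA : ∀ x ∈ A, ∀ y, M.Adj x y → y ∈ A := fun x hx y hxy =>
    (hAB y).resolve_right fun hyB => hdisj.ne_of_mem hx (by
      by_cases hyI : y ∈ I
      · exact ((hstep (.inl hxy.symm)).1 hyI).1
      · exact hIB ((hstep (.inl hxy.symm)).2 ⟨hyB, hyI⟩)) rfl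
  exact hHeg (hMC.hasOddCycleCover_induce hk (fun i => (hC i).2) hCA hMA)

/-- If `H = G[A]` is Egerváry, `R = G[B]` is a matchable KE graph (with `A`, `B`
partitioning the vertices), `I` is a maximum independent set of `R`, and every edge of
`G` between `A` and `B` joins `A` to `N_R(I)`, then `G` is Egerváry. -/
theorem egervary_of_KE_extension {V : Type*} [Fintype V] (G : SimpleGraph V)
    (A B : Set V) (hdisj : Disjoint A B) (hunion : A ∪ B = Set.univ)
    (hHpm : HasPM (G.induce A)) (hHeg : IsEgervary (G.induce A))
    (hRpm : HasPM (G.induce B)) (hRKE : IsKE (G.induce B))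
    (I : Set V) (hIB : I ⊆ B) (hIind : IsIndep G I)
    (hImax : I.ncard = alphaNum (G.induce B))
    (hcross : ∀ x ∈ A, ∀ y ∈ B, G.Adj x y → y ∉ I ∧ ∃ z ∈ I, G.Adj y z) :
    IsEgervary G :=
  egervary_of_KE_extension_general G A B hdisj hunion hHeg hRKE I hIB hIind hImax hcross
end

section
/- If G is a connected α-critical graph with a perfect matching and n(G) - 2α(G) = 2, and G has a spanning subgraph consisting of a matching together with an even number ℓ of vertex-disjoint odd cycles where some edge of G lies outside this spanning subgraph, then ℓ = 0 (i.e., the spanning subgraph is a perfect matching). -/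
/-!
Deleting an edge `e` outside the cover raises `α` by one, so `G - e` has an independent set `S`
with `α + 1` vertices. The cover still lives in `G - e`, and `S` contains at most one end of each
matching edge and at most `(k - 1) / 2` vertices of each odd cycle of length `k`. Summing over
the components of the cover gives `2 |S| + ℓ ≤ n = 2α + 2`, hence `ℓ = 0`.
-/

open SimpleGraph

variable {V : Type*}

open Finset Function

theorem Finset.two_mul_card_image_inter_le {α β : Type*} [DecidableEq β] {D : Finset α}
    {f g : α → β} (hf : Set.InjOn f D) (hg : Set.InjOn g D) (himg : D.image f = D.image g)
    {S : Finset β} (hS : ∀ a ∈ D, f a ∈ S → g a ∉ S) :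
    2 * #(D.image f ∩ S) ≤ #D := by
  have hcard (h : α → β) (hh : Set.InjOn h D) :
      #(D.image h ∩ S) = #(D.filter (h · ∈ S)) := by
    rw [← filter_mem_eq_inter, filter_image, card_image_of_injOn (hh.mono (filter_subset _ _))]
  have hfg : #(D.filter (g · ∈ S)) ≤ #(D.filter (f · ∉ S)) :=
    card_le_card fun a ha ↦ by
      simp only [mem_filter] at ha ⊢
      exact ⟨ha.1, fun hfa ↦ hS a ha.1 hfa ha.2⟩
  have := card_filter_add_card_filter_not (s := D) (f · ∈ S)
  rw [two_mul]
  nth_rw 2 [himg]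
  rw [hcard f hf, hcard g hg]
  omega

theorem Finset.card_eq_sum_card_inter {ι α : Type*} [Fintype ι] [DecidableEq α]
    {P : ι → Finset α} (hdisj : Pairwise (Disjoint on P)) (hcov : ∀ x, ∃ i, x ∈ P i)
    (T : Finset α) : #T = ∑ i, #(P i ∩ T) := by
  rw [← card_biUnion fun i _ j _ hij ↦ (hdisj hij).mono inter_subset_left inter_subset_left]
  congr 1
  ext x
  simpa using fun _ ↦ hcov x

namespace SimpleGraph

variable [DecidableEq V] {G : SimpleGraph V}

theorem Walk.IsCycle.two_mul_card_inter_lt {u : V} {c : G.Walk u u}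
    (hc : c.IsCycle) (hodd : Odd c.length) {S : Finset V}
    (hS : ∀ x ∈ S, ∀ y ∈ S, s(x, y) ∉ c.edges) :
    2 * #(c.support.toFinset ∩ S) < #c.support.toFinset := by
  set D := c.darts.toFinset
  have hfst : Set.InjOn (fun d : G.Dart ↦ d.fst) D :=
    fun x hx y hy ↦ List.inj_on_of_nodup_map (c.map_fst_darts ▸ hc.nodup_dropLast_support)
      (List.mem_toFinset.1 hx) (List.mem_toFinset.1 hy)
  have hsnd : Set.InjOn (fun d : G.Dart ↦ d.snd) D :=
    fun x hx y hy ↦ List.inj_on_of_nodup_map (c.map_snd_darts ▸ hc.support_nodup)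
      (List.mem_toFinset.1 hx) (List.mem_toFinset.1 hy)
  have htail : c.support.tail.toFinset = c.support.toFinset := by
    ext x
    simp only [List.mem_toFinset, c.mem_support_iff, iff_or_self]
    rintro rfl
    exact c.end_mem_tail_support hc.not_nil
  have himg_snd : D.image (·.snd) = c.support.toFinset := by
    rw [← htail, ← c.map_snd_darts]
    ext; simp [D]
  have himg_fst : D.image (·.fst) = c.support.toFinset := by
    rw [← htail, List.toFinset_eq_of_perm _ _ c.tail_support_perm_dropLast_support,
      ← c.map_fst_darts]
    ext; simp [D]
  have hD : #D = c.length := by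
    rw [List.toFinset_card_of_nodup (List.Nodup.of_map _ (c.map_snd_darts ▸ hc.support_nodup)),
      c.length_darts]
  have hsupp : #c.support.toFinset = c.length := by
    rw [← himg_snd, card_image_of_injOn hsnd, hD]
  have := (D.two_mul_card_image_inter_le hsnd hfst (himg_snd.trans himg_fst.symm)
    fun d hd h1 h2 ↦ hS _ h2 _ h1 (List.mem_map_of_mem (List.mem_toFinset.1 hd)))
  rw [himg_snd] at this
  obtain ⟨k, hk⟩ := hodd
  omega

theorem Subgraph.IsMatching.two_mul_card_inter_le {M : G.Subgraph} [Fintype M.verts]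
    (hM : M.IsMatching) {S : Finset V} (hS : ∀ x ∈ S, ∀ y ∈ S, ¬ M.Adj x y) :
    2 * #(M.verts.toFinset ∩ S) ≤ #M.verts.toFinset := by
  classical
  set T := M.verts.toFinset
  set D := (T ×ˢ T).filter fun p ↦ M.Adj p.1 p.2
  have hadj {p : V × V} : p ∈ D ↔ M.Adj p.1 p.2 := by
    simpa [D, T] using fun h ↦ ⟨h.fst_mem, h.snd_mem⟩
  have hfst : Set.InjOn Prod.fst D := fun p hp q hq h ↦
    Prod.ext h (hM.eq_of_adj_left (hadj.1 hp) (h ▸ hadj.1 hq))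
  have hsnd : Set.InjOn Prod.snd D := fun p hp q hq h ↦
    Prod.ext (hM.eq_of_adj_right (hadj.1 hp) (h ▸ hadj.1 hq)) h
  have himg_fst : D.image Prod.fst = T := by
    ext x
    simp only [mem_image, hadj, Set.mem_toFinset, T]
    refine ⟨fun ⟨p, hp, hpx⟩ ↦ hpx ▸ hp.fst_mem, fun hx ↦ ?_⟩
    obtain ⟨y, hxy, -⟩ := hM hx
    exact ⟨(x, y), hxy, rfl⟩
  have himg_snd : D.image Prod.snd = T := by
    ext x
    simp only [mem_image, hadj, Set.mem_toFinset, T]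
    refine ⟨fun ⟨p, hp, hpx⟩ ↦ hpx ▸ hp.snd_mem, fun hx ↦ ?_⟩
    obtain ⟨y, hxy, -⟩ := hM hx
    exact ⟨(y, x), hxy.symm, rfl⟩
  have := D.two_mul_card_image_inter_le hfst hsnd (himg_fst.trans himg_snd.symm)
    fun p hp h1 h2 ↦ hS _ h1 _ h2 (hadj.1 hp)
  rwa [← card_image_of_injOn hfst, himg_fst] at this

theorem two_mul_card_add_le_card_of_isMatching_of_isCycle [Fintype V] {M : G.Subgraph}
    (hM : M.IsMatching) {ℓ : ℕ} {u : Fin ℓ → V} {C : ∀ i, G.Walk (u i) (u i)}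
    (hcyc : ∀ i, (C i).IsCycle ∧ Odd (C i).length)
    (hCdisj : ∀ i j, i ≠ j → ∀ x, x ∈ (C i).support → x ∉ (C j).support)
    (hCM : ∀ i, ∀ x ∈ (C i).support, x ∉ M.verts)
    (hspan : ∀ x, x ∈ M.verts ∨ ∃ i, x ∈ (C i).support)
    {S : Finset V} (hSM : ∀ x ∈ S, ∀ y ∈ S, ¬ M.Adj x y)
    (hSC : ∀ i, ∀ x ∈ S, ∀ y ∈ S, s(x, y) ∉ (C i).edges) :
    2 * #S + ℓ ≤ Fintype.card V := by
  classical
  let P : Option (Fin ℓ) → Finset V :=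
    fun o ↦ o.elim M.verts.toFinset fun i ↦ (C i).support.toFinset
  have hdisj : Pairwise (Disjoint on P) := by
    rintro (_ | i) (_ | j) hne <;>
      simp only [onFun, P, Option.elim, Finset.disjoint_left, Set.mem_toFinset, List.mem_toFinset]
    · exact absurd rfl hne
    · exact fun x hx hj ↦ hCM j x hj hx
    · exact fun x hi hx ↦ hCM i x hi hx
    · exact hCdisj i j (by simpa using hne)
  have hcov : ∀ x, ∃ o, x ∈ P o := by
    intro x
    rcases hspan x with hx | ⟨i, hi⟩
    · exact ⟨none, by simpa [P] using hx⟩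
    · exact ⟨some i, by simpa [P] using hi⟩
  have hsum (T : Finset V) : #T = #(P none ∩ T) + ∑ i, #(P (some i) ∩ T) := by
    rw [card_eq_sum_card_inter hdisj hcov T, Fintype.sum_option]
  have hS := hsum S
  have huniv := hsum univ
  simp only [inter_univ] at huniv
  have hmatch : 2 * #(P none ∩ S) ≤ #(P none) := hM.two_mul_card_inter_le hSM
  have hcycles : ∑ i, (2 * #(P (some i) ∩ S) + 1) ≤ ∑ i, #(P (some i)) :=
    sum_le_sum fun i _ ↦ (hcyc i).1.two_mul_card_inter_lt (hcyc i).2 (hSC i)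
  rw [sum_add_distrib, ← mul_sum, sum_const, card_univ, Fintype.card_fin, smul_eq_mul,
    mul_one] at hcycles
  rw [← card_univ]
  omega

end SimpleGraph

theorem exists_isIndep_card_eq_alphaNum [Finite V] (H : SimpleGraph V) :
    ∃ S : Finset V, IsIndep H S ∧ #S = alphaNum H := by
  have hne : {n | ∃ s : Set V, IsIndep H s ∧ s.ncard = n}.Nonempty :=
    ⟨0, ∅, fun x hx ↦ hx.elim, Set.ncard_empty V⟩
  have hbdd : BddAbove {n | ∃ s : Set V, IsIndep H s ∧ s.ncard = n} :=
    ⟨Nat.card V, by rintro n ⟨s, -, rfl⟩; exact Set.ncard_le_card s⟩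
  obtain ⟨s, hs, hcard⟩ := Nat.sSup_mem hne hbdd
  refine ⟨s.toFinite.toFinset, by simpa using hs, ?_⟩
  rw [← Set.ncard_eq_toFinset_card, hcard, alphaNum]

theorem alphaCritical_delta_two_cover_no_cycles_general {V : Type*} [Fintype V] (G : SimpleGraph V)
    (hcrit : AlphaCritical G)
    (hdelta : Nat.card V = 2 * alphaNum G + 2)
    (M : G.Subgraph) (hM : M.IsMatching) (ℓ : ℕ)
    (u : Fin ℓ → V) (C : ∀ i : Fin ℓ, G.Walk (u i) (u i))
    (hcyc : ∀ i, (C i).IsCycle ∧ Odd (C i).length)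
    (hCdisj : ∀ i j, i ≠ j → ∀ x : V, x ∈ (C i).support → x ∉ (C j).support)
    (hCM : ∀ i, ∀ x ∈ (C i).support, x ∉ M.verts)
    (hspan : ∀ x : V, x ∈ M.verts ∨ ∃ i, x ∈ (C i).support)
    (hextra : ∃ e ∈ G.edgeSet, e ∉ M.edgeSet ∧ ∀ i, e ∉ (C i).edges) :
    ℓ = 0 := by
  classical
  obtain ⟨e, he, heM, heC⟩ := hextra
  obtain ⟨S, hS, hcard⟩ := exists_isIndep_card_eq_alphaNum (G.deleteEdges {e})
  rw [hcrit e he] at hcard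
  have hnonadj {x y : V} (hxy : G.Adj x y) (hne : s(x, y) ≠ e) (hx : x ∈ S) (hy : y ∈ S) :
      False :=
    hS x hx y hy ((G.deleteEdges_adj ..).2 ⟨hxy, hne⟩)
  have := two_mul_card_add_le_card_of_isMatching_of_isCycle hM hcyc hCdisj hCM hspan
    (fun x hx y hy hxy ↦ hnonadj (M.adj_sub hxy) (fun h ↦ heM (h ▸ hxy)) hx hy)
    fun i x hx y hy hxy ↦ hnonadj ((C i).adj_of_mem_edges hxy) (fun h ↦ heC i (h ▸ hxy)) hx hy
  rw [← Nat.card_eq_fintype_card] at this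
  omega

/-- If `G` is connected, α-critical, matchable, with `n - 2α = 2`, and `G` has a spanning
subgraph consisting of a matching together with an even number `ℓ` of vertex-disjoint odd
cycles, with some edge of `G` outside this spanning subgraph, then `ℓ = 0`. -/
theorem alphaCritical_delta_two_cover_no_cycles {V : Type*} [Fintype V] (G : SimpleGraph V)
    (hconn : G.Connected) (hcrit : AlphaCritical G) (hPM : HasPM G)
    (hdelta : Nat.card V = 2 * alphaNum G + 2)
    (M : G.Subgraph) (hM : M.IsMatching) (ℓ : ℕ) (hev : Even ℓ)
    (u : Fin ℓ → V) (C : ∀ i : Fin ℓ, G.Walk (u i) (u i))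
    (hcyc : ∀ i, (C i).IsCycle ∧ Odd (C i).length)
    (hCdisj : ∀ i j, i ≠ j → ∀ x : V, x ∈ (C i).support → x ∉ (C j).support)
    (hCM : ∀ i, ∀ x ∈ (C i).support, x ∉ M.verts)
    (hspan : ∀ x : V, x ∈ M.verts ∨ ∃ i, x ∈ (C i).support)
    (hextra : ∃ e ∈ G.edgeSet, e ∉ M.edgeSet ∧ ∀ i, e ∉ (C i).edges) :
    ℓ = 0 :=
  alphaCritical_delta_two_cover_no_cycles_general G hcrit hdelta M hM ℓ u C hcyc hCdisj hCM hspan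
    hextra
end

section
/- If a graph G has a perfect matching M, and there exist vertex-disjoint subgraphs D and R partitioning V(G) such that M restricts to perfect matchings of D and of R, R is König-Egerváry, α(D) = ν(D) - 1, and α(G) = ν(G) - 1, then there exists an edge xy of M inside D such that G - {x,y} is König-Egerváry. -/
/-!
Let `k = |M|`, so `ν(G) = k`, and fix an independent set `I` of `G` with `|I| = α(G) = k - 1`.
In a graph with a perfect matching, distinct vertices of an independent set lie on distinct
matching edges, so `α ≤ ν` there. The trace of `I` on `D` is independent in `D`, hence has at
most `α(D) = |M ∩ E(D)| - 1` vertices, so some edge `xy` of `M ∩ E(D)` misses `I`. Then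
`G - {x, y}` has the perfect matching `M - xy` with `k - 1` edges and still contains `I`, so its
independence and matching numbers both equal half its order.
-/

open SimpleGraph

variable {V : Type*}

namespace SimpleGraph.Subgraph

variable {G : SimpleGraph V} {M : G.Subgraph}

theorem IsMatching.ncard_verts [Finite V] (h : M.IsMatching) :
    M.verts.ncard = 2 * M.edgeSet.ncard := by
  classical
  have := Fintype.ofFinite V
  have hfiber : ∀ e : M.edgeSet, Nat.card {v // h.toEdge v = e} = 2 := by
    rintro ⟨e, he⟩
    change Nat.card (h.toEdge ⁻¹' {⟨e, he⟩}) = 2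
    induction e using Sym2.ind with
    | _ u v =>
      rw [h.toEdge_preimage_singleton he, Nat.card_coe_set_eq, Set.ncard_pair]
      exact fun huv => (M.adj_sub he).ne (congrArg Subtype.val huv)
  rw [← Nat.card_coe_set_eq, ← Nat.card_coe_set_eq,
    Nat.card_congr (Equiv.sigmaFiberEquiv h.toEdge).symm, Nat.card_sigma,
    Finset.sum_congr rfl fun e _ => hfiber e, Finset.sum_const, Finset.card_univ, smul_eq_mul,
    mul_comm, Nat.card_eq_fintype_card]

theorem IsPerfectMatching.two_mul_ncard_edgeSet [Finite V] (h : M.IsPerfectMatching) :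
    2 * M.edgeSet.ncard = Nat.card V := by
  rw [← h.1.ncard_verts, h.2.verts_eq_univ, Set.ncard_univ]

theorem IsMatching.exists_adj_notMem_of_ncard_lt [Finite V] (h : M.IsMatching) {s : Set V}
    (hs : s.ncard < M.edgeSet.ncard) : ∃ x y, M.Adj x y ∧ x ∉ s ∧ y ∉ s := by
  by_contra! hcover
  let f : {v : M.verts // (v : V) ∈ s} → M.edgeSet := fun v => h.toEdge v
  have hf : Function.Surjective f := by
    rintro ⟨e, he⟩
    induction e using Sym2.ind with
    | _ x y =>
      by_cases hx : x ∈ s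
      · exact ⟨⟨⟨x, he.fst_mem⟩, hx⟩, h.toEdge_eq_of_adj he⟩
      · exact ⟨⟨⟨y, he.snd_mem⟩, hcover x y he hx⟩,
          (h.toEdge_eq_toEdge_of_adj he).symm.trans (h.toEdge_eq_of_adj he)⟩
  refine hs.not_ge ?_
  calc M.edgeSet.ncard = Nat.card M.edgeSet := (Nat.card_coe_set_eq _).symm
    _ ≤ Nat.card {v : M.verts // (v : V) ∈ s} := Nat.card_le_card_of_surjective f hf
    _ ≤ Nat.card s := Nat.card_le_card_of_injective (fun v => ⟨v.1.1, v.2⟩)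
        fun a b hab => by
          simp only [Subtype.mk.injEq] at hab
          exact Subtype.ext (Subtype.ext hab)
    _ = s.ncard := Nat.card_coe_set_eq s

theorem IsMatching.notMem_pair_of_adj (h : M.IsMatching) {x y v w : V} (hxy : M.Adj x y)
    (hvw : M.Adj v w) (hv : v ∉ ({x, y} : Set V)) : w ∉ ({x, y} : Set V) := by
  rintro (rfl | rfl)
  · exact hv (Or.inr (h.eq_of_adj_right hvw hxy.symm))
  · exact hv (Or.inl (h.eq_of_adj_right hvw hxy))

theorem IsPerfectMatching.comap_induce (h : M.IsPerfectMatching) {s : Set V}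
    (hs : ∀ ⦃v w⦄, M.Adj v w → v ∈ s → w ∈ s) :
    (M.comap (Embedding.induce s).toHom).IsPerfectMatching := by
  refine isPerfectMatching_iff.2 fun v => ?_
  obtain ⟨w, hvw, huniq⟩ := isPerfectMatching_iff.1 h v
  exact ⟨⟨w, hs hvw v.2⟩, ⟨M.adj_sub hvw, hvw⟩, fun u hu => Subtype.ext (huniq u hu.2)⟩

theorem IsPerfectMatching.comap_induce_compl_pair [Finite V] (h : M.IsPerfectMatching) {x y : V}
    (hxy : M.Adj x y) :
    (M.comap (Embedding.induce ({x, y}ᶜ : Set V)).toHom).IsPerfectMatching ∧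
      (M.comap (Embedding.induce ({x, y}ᶜ : Set V)).toHom).edgeSet.ncard + 1 =
        M.edgeSet.ncard := by
  have hpm := h.comap_induce (s := {x, y}ᶜ) fun v w hvw => h.1.notMem_pair_of_adj hxy hvw
  refine ⟨hpm, ?_⟩
  have hcompl := Set.ncard_add_ncard_compl ({x, y} : Set V)
  rw [Set.ncard_pair (M.adj_sub hxy).ne] at hcompl
  have hcard := hpm.two_mul_ncard_edgeSet
  rw [Nat.card_coe_set_eq] at hcard
  have := h.two_mul_ncard_edgeSet
  omega

theorem IsPerfectMatching.ncard_le_of_isIndep [Finite V] (h : M.IsPerfectMatching) {s : Set V}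
    (hs : IsIndep G s) : s.ncard ≤ M.edgeSet.ncard := by
  refine Set.ncard_le_ncard_of_injOn (fun v => (h.1.toEdge ⟨v, h.2 v⟩ : Sym2 V))
    (fun v _ => Subtype.prop _) fun v hv w hw hvw => ?_
  simp only at hvw
  by_contra hne
  have hedge : (h.1.toEdge ⟨w, h.2 w⟩ : Sym2 V) = s(v, w) :=
    (Sym2.mem_and_mem_iff hne).1 ⟨hvw ▸ h.1.mem_coe_toEdge (h.2 v), h.1.mem_coe_toEdge (h.2 w)⟩
  have hadj : M.Adj v w := by
    have := (h.1.toEdge ⟨w, h.2 w⟩).2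
    rwa [hedge] at this
  exact hs v hv w hw (M.adj_sub hadj)

end SimpleGraph.Subgraph

theorem IsIndep.induce {G : SimpleGraph V} {s : Set V} (hs : IsIndep G s)
    (t : Set V) : IsIndep (G.induce t) (Subtype.val ⁻¹' s) :=
  fun x hx y hy => hs x hx y hy

section Numbers

variable [Finite V] {G : SimpleGraph V}

theorem bddAbove_setOf_ncard (p : Set V → Prop) : BddAbove {n | ∃ s, p s ∧ s.ncard = n} :=
  ⟨Nat.card V, by rintro _ ⟨s, -, rfl⟩; exact Set.ncard_le_card s⟩

theorem IsIndep.ncard_le_alphaNum {s : Set V} (hs : IsIndep G s) : s.ncard ≤ alphaNum G :=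
  le_csSup (bddAbove_setOf_ncard _) ⟨s, hs, rfl⟩

theorem exists_isIndep_ncard_eq_alphaNum (G : SimpleGraph V) :
    ∃ s, IsIndep G s ∧ s.ncard = alphaNum G :=
  Nat.sSup_mem (s := {n | ∃ s, IsIndep G s ∧ s.ncard = n})
    ⟨0, ∅, fun _ h => h.elim, Set.ncard_empty V⟩ (bddAbove_setOf_ncard _)

theorem alphaNum_le_of_isPerfectMatching {M : G.Subgraph} (hM : M.IsPerfectMatching) :
    alphaNum G ≤ M.edgeSet.ncard := by
  obtain ⟨s, hs, hcard⟩ := exists_isIndep_ncard_eq_alphaNum G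
  exact hcard ▸ hM.ncard_le_of_isIndep hs

theorem matchNum_eq_of_isPerfectMatching {M : G.Subgraph} (hM : M.IsPerfectMatching) :
    matchNum G = M.edgeSet.ncard := by
  unfold matchNum
  have hle : ∀ n ∈ {n | ∃ N : G.Subgraph, N.IsMatching ∧ N.edgeSet.ncard = n},
      n ≤ M.edgeSet.ncard := by
    rintro _ ⟨N, hN, rfl⟩
    have := hN.ncard_verts
    have := hM.two_mul_ncard_edgeSet
    have := Set.ncard_le_card N.verts
    omega
  refine le_antisymm (csSup_le ?_ hle) (le_csSup ⟨_, hle⟩ ⟨M, hM.1, rfl⟩)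
  exact ⟨_, M, hM.1, rfl⟩

theorem isKE_of_isPerfectMatching_of_ncard_le {M : G.Subgraph} {s : Set V}
    (hM : M.IsPerfectMatching) (hs : IsIndep G s) (hMs : M.edgeSet.ncard ≤ s.ncard) :
    IsKE G := by
  have := hs.ncard_le_alphaNum
  have := alphaNum_le_of_isPerfectMatching hM
  have := hM.two_mul_ncard_edgeSet
  rw [IsKE, matchNum_eq_of_isPerfectMatching hM]
  omega

end Numbers

theorem exists_matching_edge_KE_deletion_general {V : Type*} [Fintype V] (G : SimpleGraph V)
    (M : G.Subgraph) (hM : M.IsPerfectMatching)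
    (A B : Set V) (hdisj : Disjoint A B)
    (hsplit : ∀ x y : V, M.Adj x y → (x ∈ A ∧ y ∈ A) ∨ (x ∈ B ∧ y ∈ B))
    (hD : alphaNum (G.induce A) + 1 = matchNum (G.induce A))
    (hG : alphaNum G + 1 = matchNum G) :
    ∃ x y : V, x ∈ A ∧ y ∈ A ∧ M.Adj x y ∧ IsKE (G.induce ({x, y}ᶜ : Set V)) := by
  have hA : ∀ ⦃v w⦄, M.Adj v w → v ∈ A → w ∈ A := fun v w hvw hv =>
    (hsplit v w hvw).elim And.right fun hB => absurd hB.1 (hdisj.notMem_of_mem_left hv)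
  obtain ⟨I, hI, hIcard⟩ := exists_isIndep_ncard_eq_alphaNum G
  have hMA := hM.comap_induce hA
  have hIA := (hI.induce A).ncard_le_alphaNum
  rw [matchNum_eq_of_isPerfectMatching hMA] at hD
  obtain ⟨⟨x, hxA⟩, ⟨y, hyA⟩, ⟨-, hxy : M.Adj x y⟩, hx : x ∉ I, hy : y ∉ I⟩ :=
    hMA.1.exists_adj_notMem_of_ncard_lt (by omega : (Subtype.val ⁻¹' I).ncard < _)
  refine ⟨x, y, hxA, hyA, hxy, ?_⟩
  obtain ⟨hMC, hMCcard⟩ := hM.comap_induce_compl_pair hxy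
  refine isKE_of_isPerfectMatching_of_ncard_le hMC (hI.induce _) ?_
  have hIsub : I ⊆ Set.range ((↑) : ({x, y}ᶜ : Set V) → V) := by
    rw [Subtype.range_coe]
    rintro v hv (rfl | rfl) <;> contradiction
  rw [Set.ncard_preimage_of_injective_subset_range Subtype.val_injective hIsub]
  rw [matchNum_eq_of_isPerfectMatching hM] at hG
  omega

/-- If `G` has perfect matching `M` splitting into perfect matchings of complementary
induced subgraphs `D = G[A]` (with `α(D) = ν(D) - 1`) and KE `R = G[B]`, and
`α(G) = ν(G) - 1`, then some `M`-edge `xy` inside `D` has `G - {x,y}` König-Egerváry. -/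
theorem exists_matching_edge_KE_deletion {V : Type*} [Fintype V] (G : SimpleGraph V)
    (M : G.Subgraph) (hM : M.IsPerfectMatching)
    (A B : Set V) (hdisj : Disjoint A B) (hunion : A ∪ B = Set.univ)
    (hsplit : ∀ x y : V, M.Adj x y → (x ∈ A ∧ y ∈ A) ∨ (x ∈ B ∧ y ∈ B))
    (hRKE : IsKE (G.induce B))
    (hD : alphaNum (G.induce A) + 1 = matchNum (G.induce A))
    (hG : alphaNum G + 1 = matchNum G) :
    ∃ x y : V, x ∈ A ∧ y ∈ A ∧ M.Adj x y ∧ IsKE (G.induce ({x, y}ᶜ : Set V)) :=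
  exists_matching_edge_KE_deletion_general G M hM A B hdisj hsplit hD hG
end
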